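/- Let E be a real Hilbert space and let f : E → ℝ be differentiable with M-Lipschitz gradient, M ≥ 0, and bounded above with sup f − f(u(0)) ≤ B for some B ≥ 0. Let ζ ≥ 1 be a natural number with ζ ≥ M²·α² where α > 0, and define iterates u(i+1) = u(i) + (α/√ζ)·∇f(u(i)). Then min_{i<ζ} ‖∇f(u(i))‖² ≤ 2·B / (α·√ζ). In particular, the minimum squared gradient norm over the first ζ iterates converges to 0 as ζ → ∞ at rate 1/√ζ. -/

import Mathlib

/-!
With step size `η = α / √ζ` the hypothesis `M² α² ≤ ζ` gives `M η ≤ 1`, so the quadratic lower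
bound `f (x + v) ≥ f x + ⟪∇f x, v⟫ - (M/2)‖v‖²` makes every ascent step gain at least
`(η/2)‖∇f (u i)‖²`. Telescoping over `ζ` steps, `ζ (η/2) min_i ‖∇f (u i)‖² ≤ sup f - f (u 0) ≤ B`,
and `ζ η = α √ζ`.
-/

open RealInnerProductSpace

section GradientAscent

variable {E : Type*} [NormedAddCommGroup E] [InnerProductSpace ℝ E] [CompleteSpace E]
  {f : E → ℝ} {M : ℝ}

theorem HasGradientAt.hasDerivAt_comp_add_smul {g x v : E} {t : ℝ}
    (h : HasGradientAt f g (x + t • v)) :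
    HasDerivAt (fun s : ℝ => f (x + s • v)) ⟪g, v⟫ t := by
  have hline : HasDerivAt (fun s : ℝ => x + s • v) v t := by
    simpa using ((hasDerivAt_id t).smul_const v).const_add x
  simpa [Function.comp_def] using h.hasFDerivAt.comp_hasDerivAt t hline

theorem le_apply_add_of_lipschitz_gradient (hf : Differentiable ℝ f)
    (hlip : ∀ x y, ‖gradient f x - gradient f y‖ ≤ M * ‖x - y‖) (x v : E) :
    f x + ⟪gradient f x, v⟫ - M / 2 * ‖v‖ ^ 2 ≤ f (x + v) := by
  set φ : ℝ → ℝ := fun t => f (x + t • v) - t * ⟪gradient f x, v⟫ + M * ‖v‖ ^ 2 / 2 * t ^ 2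
  have hφ : ∀ t, HasDerivAt φ
      (⟪gradient f (x + t • v) - gradient f x, v⟫ + M * ‖v‖ ^ 2 * t) t := by
    intro t
    refine ((((hf _).hasGradientAt.hasDerivAt_comp_add_smul).sub
      ((hasDerivAt_id t).mul_const _)).add
        ((hasDerivAt_pow 2 t).const_mul (M * ‖v‖ ^ 2 / 2))).congr_deriv ?_
    rw [inner_sub_left]
    ring
  have hφ_nonneg : ∀ t ∈ interior (Set.Ici (0 : ℝ)),
      0 ≤ ⟪gradient f (x + t • v) - gradient f x, v⟫ + M * ‖v‖ ^ 2 * t := by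
    intro t ht
    rw [interior_Ici, Set.mem_Ioi] at ht
    have hgrad : ‖gradient f (x + t • v) - gradient f x‖ ≤ M * t * ‖v‖ := by
      simpa [norm_smul, abs_of_pos ht, mul_assoc] using hlip (x + t • v) x
    have hinner := (abs_le.1 (abs_real_inner_le_norm (gradient f (x + t • v) - gradient f x) v)).1
    nlinarith [norm_nonneg v]
  have hmono : MonotoneOn φ (Set.Ici 0) :=
    monotoneOn_of_hasDerivWithinAt_nonneg (convex_Ici 0)
      (fun t _ => (hφ t).continuousAt.continuousWithinAt)
      (fun t _ => (hφ t).hasDerivWithinAt) hφ_nonneg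
  have h01 := hmono Set.self_mem_Ici (Set.mem_Ici.2 zero_le_one) zero_le_one
  simp only [φ, zero_smul, one_smul, add_zero] at h01
  linarith

theorem mul_norm_gradient_sq_le_apply_add_smul_gradient_sub (hf : Differentiable ℝ f)
    (hlip : ∀ x y, ‖gradient f x - gradient f y‖ ≤ M * ‖x - y‖) {η : ℝ} (hη : 0 ≤ η)
    (hMη : M * η ≤ 1) (x : E) :
    η / 2 * ‖gradient f x‖ ^ 2 ≤ f (x + η • gradient f x) - f x := by
  have h := le_apply_add_of_lipschitz_gradient hf hlip x (η • gradient f x)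
  rw [real_inner_smul_right, real_inner_self_eq_norm_sq, norm_smul, mul_pow, Real.norm_eq_abs,
    sq_abs] at h
  nlinarith [mul_nonneg (mul_nonneg hη (sq_nonneg ‖gradient f x‖)) (sub_nonneg.2 hMη)]

theorem mul_sum_norm_gradient_sq_le_of_gradient_ascent (hf : Differentiable ℝ f)
    (hlip : ∀ x y, ‖gradient f x - gradient f y‖ ≤ M * ‖x - y‖) {η : ℝ} (hη : 0 ≤ η)
    (hMη : M * η ≤ 1) {u : ℕ → E} (hu : ∀ i, u (i + 1) = u i + η • gradient f (u i)) (n : ℕ) :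
    η / 2 * ∑ i ∈ Finset.range n, ‖gradient f (u i)‖ ^ 2 ≤ f (u n) - f (u 0) := by
  rw [Finset.mul_sum, ← Finset.sum_range_sub fun i => f (u i)]
  exact Finset.sum_le_sum fun i _ =>
    hu i ▸ mul_norm_gradient_sq_le_apply_add_smul_gradient_sub hf hlip hη hMη _

end GradientAscent

theorem mul_div_sqrt_le_one {M α ζ : ℝ} (h : M ^ 2 * α ^ 2 ≤ ζ) : M * (α / √ζ) ≤ 1 := by
  rw [← mul_div_assoc]
  refine div_le_one_of_le₀ ((le_abs_self _).trans (Real.abs_le_sqrt ?_)) (Real.sqrt_nonneg ζ)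
  rwa [mul_pow]

/-- Rate claim of the paper's Theorem 5.4. Let `f : E → ℝ` be differentiable
with `M`-Lipschitz gradient, bounded above with `sup f − f (u 0) ≤ B` (`B ≥ 0`), let `ζ ≥ 1`
with `ζ ≥ M² α²` and `α > 0`, and let `u (i+1) = u i + (α/√ζ) • ∇f (u i)`. Then
`min_{i<ζ} ‖∇f (u i)‖² ≤ 2 B / (α √ζ)`. -/
theorem gradient_ascent_rate
    {E : Type*} [NormedAddCommGroup E] [InnerProductSpace ℝ E] [CompleteSpace E]
    (f : E → ℝ) (M : ℝ)
    (hf : Differentiable ℝ f)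
    (hlip : ∀ x y, ‖gradient f x - gradient f y‖ ≤ M * ‖x - y‖)
    (hbdd : BddAbove (Set.range f))
    (B : ℝ)
    (u : ℕ → E)
    (hsup : (⨆ x, f x) - f (u 0) ≤ B)
    (ζ : ℕ) (hζ : 1 ≤ ζ) (α : ℝ) (hα : 0 < α)
    (hζα : M ^ 2 * α ^ 2 ≤ (ζ : ℝ))
    (hu : ∀ i, u (i + 1) = u i + (α / Real.sqrt ζ) • gradient f (u i)) :
    (Finset.range ζ).inf' (Finset.nonempty_range_iff.mpr (by omega))
        (fun i => ‖gradient f (u i)‖ ^ 2) ≤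
      2 * B / (α * Real.sqrt ζ) := by
  set m := (Finset.range ζ).inf' _ fun i => ‖gradient f (u i)‖ ^ 2
  have hζ_pos : (0 : ℝ) < ζ := by exact_mod_cast hζ
  have hsqrt_pos : 0 < √(ζ : ℝ) := Real.sqrt_pos.2 hζ_pos
  have hsum := mul_sum_norm_gradient_sq_le_of_gradient_ascent hf hlip
    (div_pos hα hsqrt_pos).le (mul_div_sqrt_le_one hζα) hu ζ
  have hmin : (ζ : ℝ) * m ≤ ∑ i ∈ Finset.range ζ, ‖gradient f (u i)‖ ^ 2 := by
    simpa [nsmul_eq_mul] using Finset.card_nsmul_le_sum _ _ m fun i hi => Finset.inf'_le _ hi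
  have hbound : f (u ζ) ≤ ⨆ x, f x := le_ciSup hbdd (u ζ)
  have hζ_div : (ζ : ℝ) * (α / √ζ) = α * √ζ := by
    field_simp
    rw [Real.sq_sqrt hζ_pos.le]
  have hrate : α * √ζ / 2 * m ≤ B :=
    calc α * √ζ / 2 * m = α / √ζ / 2 * (ζ * m) := by rw [← hζ_div]; ring
      _ ≤ α / √ζ / 2 * ∑ i ∈ Finset.range ζ, ‖gradient f (u i)‖ ^ 2 := by gcongr
      _ ≤ B := by linarith
  rw [le_div_iff₀ (by positivity)]
  linarith
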